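/- Let (aₙ)_{n≥0} be the Taylor coefficients of κ₁ at 0, i.e., κ₁(t) = ∑_{n≥0} aₙ tⁿ on (-1,1). Then all aₙ are nonnegative, a₁ > 0, and ∑_{n≥0} aₙ = κ₁(1) = 1. -/

import Mathlib

/-- The degree-one arc-cosine kernel. -/
noncomputable def kappa1 (u : ℝ) : ℝ :=
  (Real.sqrt (1 - u ^ 2) + (Real.pi - Real.arccos u) * u) / Real.pi

/-!
A power series that converges to `κ₁` on `(-1, 1)` is its Taylor series at `0`, so
`aₙ = κ₁⁽ⁿ⁾(0) / n!`. Here `κ₁(0) = 1/π`, `κ₁'(0) = 1/2` and `κ₁'' = 1 / (π √(1 - u²))`, whose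
Taylor coefficients come from the binomial series of `(1 - x)^(-1/2)` at `x = u²` and are all
nonnegative. With nonnegative coefficients, `∑ aₙ` is the monotone limit of `κ₁(t)` as `t → 1⁻`,
which is `κ₁(1) = 1` by continuity.
-/

open Filter Set Topology FormalMultilinearSeries
open scoped NNReal ENNReal Nat

theorem hasFPowerSeriesOnBall_ofScalars_of_hasSum {c : ℕ → ℝ} {f : ℝ → ℝ} {r : ℝ≥0∞}
    (hr : 0 < r) (hf : ∀ y ∈ Metric.eball (0 : ℝ) r, HasSum (fun n => c n * y ^ n) (f y)) :
    HasFPowerSeriesOnBall f (ofScalars ℝ c) 0 r where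
  r_le := by
    refine ENNReal.le_of_forall_nnreal_lt fun ρ hρ =>
      (ofScalars ℝ c).le_radius_of_tendsto (l := 0) ?_
    have hρ' : (ρ : ℝ) ∈ Metric.eball (0 : ℝ) r := by
      simpa [edist_dist, Real.dist_eq, ENNReal.ofReal_coe_nnreal] using hρ
    simpa [ofScalars_norm, Real.norm_eq_abs, abs_mul, abs_pow] using
      (hf _ hρ').summable.tendsto_atTop_zero.norm
  r_pos := hr
  hasSum hy := by simpa [ofScalars_apply_eq, zero_add, mul_comm] using hf _ hy

theorem HasFPowerSeriesAt.ofScalars_eq_iteratedDeriv_div {𝕜 : Type*} [NontriviallyNormedField 𝕜]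
    [CompleteSpace 𝕜] [CharZero 𝕜] {c : ℕ → 𝕜} {f : 𝕜 → 𝕜} {x : 𝕜}
    (hf : HasFPowerSeriesAt f (ofScalars 𝕜 c) x) (n : ℕ) : c n = iteratedDeriv n f x / n ! :=
  congrFun (ofScalars_series_injective 𝕜 𝕜
    (hf.eq_formalMultilinearSeries hf.analyticAt.hasFPowerSeriesAt)) n

theorem HasFPowerSeriesAt.ofScalars_add_two_eq {𝕜 : Type*} [NontriviallyNormedField 𝕜]
    [CompleteSpace 𝕜] [CharZero 𝕜] {a b : ℕ → 𝕜} {f : 𝕜 → 𝕜} {x : 𝕜}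
    (hf : HasFPowerSeriesAt f (ofScalars 𝕜 a) x)
    (hf'' : HasFPowerSeriesAt (deriv (deriv f)) (ofScalars 𝕜 b) x) (n : ℕ) :
    a (n + 2) = b n / ((n + 1) * (n + 2)) := by
  rw [hf.ofScalars_eq_iteratedDeriv_div, hf''.ofScalars_eq_iteratedDeriv_div,
    iteratedDeriv_succ', iteratedDeriv_succ', Nat.factorial_succ, Nat.factorial_succ, div_div]
  push_cast
  ring

theorem Ring.choose_add_sub_one_pos {R : Type*} [Field R] [LinearOrder R] [IsStrictOrderedRing R]
    {a : R} (ha : 0 < a) (n : ℕ) : 0 < Ring.choose (a + n - 1) n := by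
  rw [Ring.choose_eq_smul, Polynomial.descPochhammer_smeval_eq_ascPochhammer,
    Polynomial.ascPochhammer_smeval_eq_eval, show a + n - 1 - n + 1 = a by ring, smul_eq_mul]
  exact mul_pos (by positivity) (ascPochhammer_pos n a ha)

theorem HasSum.ite_even_mul_pow {R : Type*} [Semiring R] [TopologicalSpace R] [ContinuousAdd R]
    {c : ℕ → R} {t s : R} (h : HasSum (fun k => c k * (t ^ 2) ^ k) s) :
    HasSum (fun n => (if Even n then c (n / 2) else 0) * t ^ n) s := by
  simpa using HasSum.even_add_odd (f := fun n => (if Even n then c (n / 2) else 0) * t ^ n)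
    (by simpa [pow_mul] using h) (m' := 0) (by simp)

noncomputable def invSqrtOneSubSqCoeff (n : ℕ) : ℝ :=
  if Even n then Ring.choose (1 / 2 + (n / 2 : ℕ) - 1 : ℝ) (n / 2) else 0

theorem invSqrtOneSubSqCoeff_nonneg (n : ℕ) : 0 ≤ invSqrtOneSubSqCoeff n := by
  unfold invSqrtOneSubSqCoeff
  split_ifs
  exacts [(Ring.choose_add_sub_one_pos one_half_pos _).le, le_rfl]

theorem hasSum_invSqrtOneSubSqCoeff {t : ℝ} (ht : |t| < 1) :
    HasSum (fun n => invSqrtOneSubSqCoeff n * t ^ n) (1 / √(1 - t ^ 2)) := by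
  have ht2 : t ^ 2 ∈ Metric.eball (0 : ℝ) 1 := by
    simpa [edist_dist, Real.dist_eq, abs_pow] using pow_lt_one₀ (abs_nonneg t) ht two_ne_zero
  have hbinom := (Real.one_div_one_sub_rpow_hasFPowerSeriesOnBall_zero (1 / 2)).hasSum ht2
  simp only [ofScalars_apply_eq, smul_eq_mul, zero_add] at hbinom
  rw [Real.sqrt_eq_rpow]
  exact hbinom.ite_even_mul_pow

theorem hasDerivAt_kappa1 {x : ℝ} (hx : x ∈ Ioo (-1 : ℝ) 1) :
    HasDerivAt kappa1 ((Real.pi - Real.arccos x) / Real.pi) x := by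
  have h1 : 0 < 1 - x ^ 2 := by nlinarith [hx.1, hx.2]
  have hs := ((hasDerivAt_pow 2 x).const_sub 1).sqrt h1.ne'
  have ha : HasDerivAt (fun y => (Real.pi - Real.arccos y) * y)
      (-(-(1 / √(1 - x ^ 2))) * x + (Real.pi - Real.arccos x) * 1) x :=
    ((Real.hasDerivAt_arccos hx.1.ne' hx.2.ne).const_sub Real.pi).mul (hasDerivAt_id x)
  have hnum : HasDerivAt (fun y => √(1 - y ^ 2) + (Real.pi - Real.arccos y) * y)
      (Real.pi - Real.arccos x) x := by
    refine (hs.add ha).congr_deriv ?_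
    have : √(1 - x ^ 2) ≠ 0 := (Real.sqrt_pos.mpr h1).ne'
    field_simp
    ring
  exact hnum.div_const Real.pi

theorem deriv_deriv_kappa1 {x : ℝ} (hx : x ∈ Ioo (-1 : ℝ) 1) :
    deriv (deriv kappa1) x = 1 / √(1 - x ^ 2) / Real.pi := by
  have hderiv : deriv kappa1 =ᶠ[𝓝 x] fun y => (Real.pi - Real.arccos y) / Real.pi :=
    eventually_of_mem (isOpen_Ioo.mem_nhds hx) fun y hy => (hasDerivAt_kappa1 hy).deriv
  have harccos := (Real.hasDerivAt_arccos hx.1.ne' hx.2.ne).const_sub Real.pi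
  rw [hderiv.deriv_eq, (harccos.div_const Real.pi).deriv, neg_neg]

theorem hasFPowerSeriesAt_deriv_deriv_kappa1 :
    HasFPowerSeriesAt (deriv (deriv kappa1))
      (ofScalars ℝ fun n => invSqrtOneSubSqCoeff n / Real.pi) 0 := by
  refine (hasFPowerSeriesOnBall_ofScalars_of_hasSum (f := fun y => 1 / √(1 - y ^ 2) / Real.pi)
    one_pos fun y hy => ?_).hasFPowerSeriesAt.congr ?_
  · have hy' : |y| < 1 := by simpa [edist_dist, Real.dist_eq] using hy
    simpa [div_mul_eq_mul_div] using (hasSum_invSqrtOneSubSqCoeff hy').div_const Real.pi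
  · filter_upwards [Ioo_mem_nhds (neg_lt_zero.mpr one_pos) one_pos] with y hy
    exact (deriv_deriv_kappa1 hy).symm

theorem hasSum_of_nonneg_of_tendsto_nhdsWithin_lt_one {a : ℕ → ℝ} (ha : ∀ n, 0 ≤ a n)
    {f : ℝ → ℝ} {s : ℝ}
    (hf : ∀ t ∈ Ioo (0 : ℝ) 1, HasSum (fun n => a n * t ^ n) (f t))
    (hlim : Tendsto f (𝓝[<] 1) (𝓝 s)) : HasSum a s := by
  have hIoo : ∀ᶠ t in 𝓝[<] (1 : ℝ), t ∈ Ioo (0 : ℝ) 1 :=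
    Ioo_mem_nhdsLT_of_mem ⟨zero_lt_one, le_rfl⟩
  have hpartial : ∀ N, ∑ n ∈ Finset.range N, a n ≤ s := by
    intro N
    have hcont : Continuous fun t : ℝ => ∑ n ∈ Finset.range N, a n * t ^ n := by fun_prop
    have hpoly : Tendsto (fun t : ℝ => ∑ n ∈ Finset.range N, a n * t ^ n) (𝓝[<] 1)
        (𝓝 (∑ n ∈ Finset.range N, a n)) := by
      simpa using (hcont.tendsto 1).mono_left nhdsWithin_le_nhds
    refine le_of_tendsto_of_tendsto hpoly hlim (hIoo.mono fun t ht => ?_)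
    exact sum_le_hasSum _ (fun n _ => mul_nonneg (ha n) (pow_nonneg ht.1.le n)) (hf t ht)
  have hsum : Summable a := summable_of_sum_range_le ha hpartial
  have hle : s ≤ ∑' n, a n := by
    refine le_of_tendsto hlim (hIoo.mono fun t ht => ?_)
    refine hasSum_le (fun n => ?_) (hf t ht) hsum.hasSum
    exact mul_le_of_le_one_right (ha n) (pow_le_one₀ ht.1.le ht.2.le)
  exact (le_antisymm (hsum.tsum_le_of_sum_range_le hpartial) hle) ▸ hsum.hasSum

theorem kappa1_zero : kappa1 0 = 1 / Real.pi := by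
  simp [kappa1]

theorem kappa1_one : kappa1 1 = 1 := by
  simp [kappa1, Real.pi_ne_zero]

theorem continuous_kappa1 : Continuous kappa1 := by
  unfold kappa1
  fun_prop

theorem deriv_kappa1_zero : deriv kappa1 0 = 1 / 2 := by
  rw [(hasDerivAt_kappa1 ⟨neg_one_lt_zero, zero_lt_one⟩).deriv, Real.arccos_zero]
  field_simp
  ring

theorem kappa1_coeff_nonneg {a : ℕ → ℝ} (ha : HasFPowerSeriesAt kappa1 (ofScalars ℝ a) 0) :
    ∀ n, 0 ≤ a n
  | 0 => by rw [ha.ofScalars_eq_iteratedDeriv_div, iteratedDeriv_zero, kappa1_zero]; positivity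
  | 1 => by rw [ha.ofScalars_eq_iteratedDeriv_div, iteratedDeriv_one, deriv_kappa1_zero]; positivity
  | n + 2 => by
    rw [ha.ofScalars_add_two_eq hasFPowerSeriesAt_deriv_deriv_kappa1]
    have := invSqrtOneSubSqCoeff_nonneg n
    positivity

/-- If `(aₙ)` are the Taylor coefficients of `κ₁` at `0`, then all `aₙ` are
nonnegative, `a₁ > 0`, and `∑ aₙ = κ₁(1) = 1`. -/
theorem stmt13 (a : ℕ → ℝ)
    (h : ∀ t ∈ Set.Ioo (-1 : ℝ) 1, HasSum (fun n => a n * t ^ n) (kappa1 t)) :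
    (∀ n, 0 ≤ a n) ∧ 0 < a 1 ∧ HasSum a (kappa1 1) ∧ kappa1 1 = 1 := by
  have hfps : HasFPowerSeriesAt kappa1 (ofScalars ℝ a) 0 :=
    (hasFPowerSeriesOnBall_ofScalars_of_hasSum one_pos fun y hy => h y <| by
      simpa [edist_dist, Real.dist_eq, abs_lt] using hy).hasFPowerSeriesAt
  have hnonneg := kappa1_coeff_nonneg hfps
  refine ⟨hnonneg, ?_, ?_, kappa1_one⟩
  · rw [hfps.ofScalars_eq_iteratedDeriv_div, iteratedDeriv_one, deriv_kappa1_zero]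
    norm_num
  · exact hasSum_of_nonneg_of_tendsto_nhdsWithin_lt_one hnonneg
      (fun t ht => h t ⟨by linarith [ht.1], ht.2⟩)
      (continuous_kappa1.continuousAt.tendsto.mono_left nhdsWithin_le_nhds)
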